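/- arXiv:1712.05538 — 4 statements merged into one kernel-verified Lean document; each statement's English description precedes it below -/
import Mathlib

section
/- Let G be a connected bipartite simple graph, and let i, i', j, j' be vertices of G such that i is adjacent to i' and j is adjacent to j'. Let m and M denote respectively the minimum and the maximum of the four values Ô(i,j), Ô(i,j'), Ô(i',j), Ô(i',j'). Then M − 2 ≤ m ≤ M − 1; equivalently, M − m ∈ {1, 2}. -/
/-- The oriented distance: the graph distance plus one. -/
noncomputable def orientedDist {α : Type*} (G : SimpleGraph α) (u v : α) : ℕ :=
  G.dist u v + 1

private lemma walk_parity {α : Type*} {G : SimpleGraph α} (c : α → ZMod 2)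
    (hc : ∀ {x y}, G.Adj x y → c y = c x + 1) :
    ∀ {u v : α} (p : G.Walk u v), c v = c u + (p.length : ZMod 2) := by
  intro u v p
  induction p with
  | nil => simp
  | cons h q ih =>
      rw [ih, hc h]
      push_cast [SimpleGraph.Walk.length_cons]
      ring

private lemma adj_dist_step {α : Type*} {G : SimpleGraph α} (hconn : G.Connected)
    (hbip : G.Colorable 2) {u u' : α} (huu : G.Adj u u') (w : α) :
    G.dist u' w = G.dist u w + 1 ∨ G.dist u w = G.dist u' w + 1 := by
  classical
  obtain ⟨C⟩ := hbip
  set c : α → ZMod 2 := fun x => if C x = 0 then 0 else 1 with hcdef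
  have hc : ∀ {x y}, G.Adj x y → c y = c x + 1 := by
    intro x y hxy
    have hne := C.valid hxy
    have : ∀ a b : Fin 2, a ≠ b →
        (if b = 0 then (0 : ZMod 2) else 1) = (if a = 0 then (0:ZMod 2) else 1) + 1 := by
      decide
    simpa [hcdef] using this _ _ hne
  -- parity facts
  obtain ⟨p, hp⟩ := (hconn u w).exists_walk_length_eq_dist
  obtain ⟨q, hq⟩ := (hconn u' w).exists_walk_length_eq_dist
  have h1 : c w = c u + (G.dist u w : ZMod 2) := by rw [← hp]; exact walk_parity c hc p
  have h2 : c w = c u' + (G.dist u' w : ZMod 2) := by rw [← hq]; exact walk_parity c hc q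
  have hne : G.dist u w ≠ G.dist u' w := by
    intro h
    rw [h] at h1
    have := h1.symm.trans h2
    have hcc : c u = c u' := by
      exact add_right_cancel (h1.symm.trans h2)
    rw [hc huu] at hcc
    simp at hcc
  have t1 : G.dist u' w ≤ G.dist u w + 1 := by
    have := hconn.dist_triangle (u := u') (v := u) (w := w)
    have h1 : G.dist u' u = 1 := SimpleGraph.dist_eq_one_iff_adj.mpr huu.symm
    omega
  have t2 : G.dist u w ≤ G.dist u' w + 1 := by
    have := hconn.dist_triangle (u := u) (v := u') (w := w)
    have h1 : G.dist u u' = 1 := SimpleGraph.dist_eq_one_iff_adj.mpr huu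
    omega
  omega

/-- In a connected bipartite simple graph, if `i` is adjacent to `i'` and `j` is adjacent
to `j'`, and `m` (resp. `M`) is the minimum (resp. maximum) of the four oriented distances
`Ô(i,j), Ô(i,j'), Ô(i',j), Ô(i',j')`, then `M − m ∈ {1, 2}`, i.e. `M − 2 ≤ m ≤ M − 1`. -/
theorem orientedDist_min_max {α : Type*} (G : SimpleGraph α)
    (hconn : G.Connected) (hbip : G.Colorable 2)
    (i i' j j' : α) (hi : G.Adj i i') (hj : G.Adj j j')
    (m M : ℕ)
    (hm : m = min (min (orientedDist G i j) (orientedDist G i j'))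
              (min (orientedDist G i' j) (orientedDist G i' j')))
    (hM : M = max (max (orientedDist G i j) (orientedDist G i j'))
              (max (orientedDist G i' j) (orientedDist G i' j'))) :
    M = m + 1 ∨ M = m + 2 := by
  have h1 := adj_dist_step hconn hbip hi j
  have h2 := adj_dist_step hconn hbip hi j'
  have h3 := adj_dist_step hconn hbip hj i
  have h4 := adj_dist_step hconn hbip hj i'
  rw [SimpleGraph.dist_comm (u := j) (v := i), SimpleGraph.dist_comm (u := j') (v := i)] at h3
  rw [SimpleGraph.dist_comm (u := j) (v := i'), SimpleGraph.dist_comm (u := j') (v := i')] at h4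
  simp only [orientedDist] at hm hM
  omega
end

section
/- Let G be a finite connected bipartite simple graph with at least one edge. Let ôrad := min over vertices i of (max over vertices j of Ô(i,j)), and let ρ := min, over all pairs (i, i') with i adjacent to i', of the maximum, over all pairs (j, j') with j adjacent to j', of min{Ô(i,j), Ô(i,j'), Ô(i',j), Ô(i',j')}. Then ρ = ôrad − 1 if and only if for all vertices i, i' with i adjacent to i' there exist vertices j, j' with j adjacent to j' such that Ô(i,j) ≥ ôrad and Ô(i',j') ≥ ôrad; otherwise ρ = ôrad − 2. -/
/-- `ôrad`: the minimum over vertices `i` of the maximum over vertices `j` of `Ô(i,j)`. -/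
noncomputable def oRad {α : Type*} (G : SimpleGraph α) : ℕ :=
  sInf {m : ℕ | ∃ i : α, sSup {n : ℕ | ∃ j : α, orientedDist G i j = n} = m}

/-- The minimum of the four oriented distances determined by a quadruple `(i,i',j,j')`. -/
noncomputable def quadMin {α : Type*} (G : SimpleGraph α) (i i' j j' : α) : ℕ :=
  min (min (orientedDist G i j) (orientedDist G i j'))
    (min (orientedDist G i' j) (orientedDist G i' j'))

/-- `ρ`: the minimum, over all pairs `(i,i')` with `i` adjacent to `i'`, of the maximum,
over all pairs `(j,j')` with `j` adjacent to `j'`, of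
`min{Ô(i,j), Ô(i,j'), Ô(i',j), Ô(i',j')}`. -/
noncomputable def linkRad {α : Type*} (G : SimpleGraph α) : ℕ :=
  sInf {m : ℕ | ∃ i i' : α, G.Adj i i' ∧
    sSup {n : ℕ | ∃ j j' : α, G.Adj j j' ∧ quadMin G i i' j j' = n} = m}

section Aux

variable {α : Type*} [Fintype α] (G : SimpleGraph α)

/-- max over `j` of the oriented distance from `i`. -/
noncomputable def eMax (i : α) : ℕ := sSup {n : ℕ | ∃ j : α, orientedDist G i j = n}

/-- max over edges `(j,j')` of `quadMin`. -/
noncomputable def fMax (i i' : α) : ℕ :=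
  sSup {n : ℕ | ∃ j j' : α, G.Adj j j' ∧ quadMin G i i' j j' = n}

lemma le_eMax (i j : α) : orientedDist G i j ≤ eMax G i :=
  le_csSup (Set.finite_range (orientedDist G i)).bddAbove ⟨j, rfl⟩

lemma exists_eMax (i : α) : ∃ j, orientedDist G i j = eMax G i := by
  have h : sSup {n : ℕ | ∃ j : α, orientedDist G i j = n}
      ∈ {n : ℕ | ∃ j : α, orientedDist G i j = n} :=
    Nat.sSup_mem ⟨orientedDist G i i, i, rfl⟩ (Set.finite_range (orientedDist G i)).bddAbove
  exact h

lemma oRad_le_eMax (i : α) : oRad G ≤ eMax G i := Nat.sInf_le ⟨i, rfl⟩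

lemma exists_oRad (v : α) : ∃ i, eMax G i = oRad G := by
  have h : oRad G ∈ {m : ℕ | ∃ i : α, eMax G i = m} :=
    Nat.sInf_mem ⟨eMax G v, v, rfl⟩
  exact h

lemma quad_bdd (i i' : α) :
    BddAbove {n : ℕ | ∃ j j' : α, G.Adj j j' ∧ quadMin G i i' j j' = n} := by
  refine BddAbove.mono ?_ (Set.finite_range fun p : α × α => quadMin G i i' p.1 p.2).bddAbove
  rintro n ⟨j, j', _, h⟩
  exact ⟨(j, j'), h⟩

lemma le_fMax (i i' j j' : α) (h : G.Adj j j') : quadMin G i i' j j' ≤ fMax G i i' :=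
  le_csSup (quad_bdd G i i') ⟨j, j', h, rfl⟩

lemma exists_fMax {a b : α} (hab : G.Adj a b) (i i' : α) :
    ∃ j j', G.Adj j j' ∧ quadMin G i i' j j' = fMax G i i' := by
  have h : fMax G i i' ∈ {n : ℕ | ∃ j j' : α, G.Adj j j' ∧ quadMin G i i' j j' = n} :=
    Nat.sSup_mem ⟨quadMin G i i' a b, a, b, hab, rfl⟩ (quad_bdd G i i')
  exact h

lemma linkRad_le_fMax (i i' : α) (h : G.Adj i i') : linkRad G ≤ fMax G i i' :=
  Nat.sInf_le ⟨i, i', h, rfl⟩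

lemma exists_linkRad {a b : α} (hab : G.Adj a b) :
    ∃ i i', G.Adj i i' ∧ fMax G i i' = linkRad G := by
  have h : linkRad G ∈ {m : ℕ | ∃ i i' : α, G.Adj i i' ∧ fMax G i i' = m} :=
    Nat.sInf_mem ⟨fMax G a b, a, b, hab, rfl⟩
  exact h

variable {G}

omit [Fintype α] in
lemma exists_adj (hconn : G.Connected) {a b : α} (hab : G.Adj a b) (v : α) :
    ∃ w, G.Adj v w := by
  obtain ⟨p⟩ := hconn.preconnected v a
  cases p with
  | nil => exact ⟨b, hab⟩
  | cons h q => exact ⟨_, h⟩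

omit [Fintype α] in
lemma walk_parity_s5 (c : G.Coloring (Fin 2)) {u v : α} (p : G.Walk u v) :
    (c u = c v ↔ Even p.length) := by
  induction p with
  | nil => simp
  | @cons u x v h q ih =>
    have hne : c u ≠ c x := c.valid h
    rw [SimpleGraph.Walk.length_cons, Nat.even_add_one, ← ih]
    revert hne
    generalize c u = s; generalize c x = t; generalize c v = r
    revert s t r; decide

omit [Fintype α] in
lemma dist_ne (hconn : G.Connected) (c : G.Coloring (Fin 2)) {u v : α}
    (h : G.Adj u v) (w : α) : G.dist w u ≠ G.dist w v := by
  intro heq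
  obtain ⟨p, hp⟩ := (hconn.preconnected w u).exists_walk_length_eq_dist
  obtain ⟨q, hq⟩ := (hconn.preconnected w v).exists_walk_length_eq_dist
  have h1 := walk_parity_s5 c p
  have h2 := walk_parity_s5 c q
  rw [hp, heq, ← hq] at h1
  have hne : c u ≠ c v := c.valid h
  rw [← h2] at h1
  revert hne h1
  generalize c u = s; generalize c v = t; generalize c w = r
  revert s t r; decide

omit [Fintype α] in
lemma dist_adj_le (hconn : G.Connected) {u v : α} (h : G.Adj u v) (w : α) :
    G.dist w v ≤ G.dist w u + 1 := by
  obtain ⟨p, hp⟩ := (hconn.preconnected w u).exists_walk_length_eq_dist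
  calc G.dist w v ≤ (p.concat h).length := SimpleGraph.dist_le _
    _ = G.dist w u + 1 := by rw [SimpleGraph.Walk.length_concat, hp]

end Aux

/-- Radius dichotomy: `ρ = ôrad − 1` iff for all vertices `i, i'` with `i` adjacent to `i'`
there exist vertices `j, j'` with `j` adjacent to `j'` such that `Ô(i,j) ≥ ôrad` and
`Ô(i',j') ≥ ôrad`; otherwise `ρ = ôrad − 2`. -/
theorem linkRad_dichotomy {α : Type*} [Fintype α] (G : SimpleGraph α)
    (hconn : G.Connected) (hbip : G.Colorable 2) (hedge : G.edgeSet.Nonempty) :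
    (linkRad G + 1 = oRad G ↔
      ∀ i i' : α, G.Adj i i' →
        ∃ j j' : α, G.Adj j j' ∧
          oRad G ≤ orientedDist G i j ∧ oRad G ≤ orientedDist G i' j') ∧
    ((¬ ∀ i i' : α, G.Adj i i' →
        ∃ j j' : α, G.Adj j j' ∧
          oRad G ≤ orientedDist G i j ∧ oRad G ≤ orientedDist G i' j') →
      linkRad G + 2 = oRad G) := by
  classical
  obtain ⟨a, b, hab⟩ : ∃ a b, G.Adj a b := by
    obtain ⟨e, he⟩ := hedge
    induction e using Sym2.ind with
    | _ a b => exact ⟨a, b, he⟩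
  obtain ⟨c⟩ := hbip
  set R := oRad G with hRdef
  -- Upper bound: linkRad + 1 ≤ R
  have hA : linkRad G + 1 ≤ R := by
    obtain ⟨i0, hi0⟩ := exists_oRad G a
    obtain ⟨i0', hi0'⟩ := exists_adj hconn hab i0
    obtain ⟨j, j', hjj, hq⟩ := exists_fMax G hab i0 i0'
    have hx : orientedDist G i0 j ≤ eMax G i0 := le_eMax G i0 j
    have hy : orientedDist G i0 j' ≤ eMax G i0 := le_eMax G i0 j'
    have hne : G.dist i0 j ≠ G.dist i0 j' := dist_ne hconn c hjj i0
    have hq1 : quadMin G i0 i0' j j' ≤ orientedDist G i0 j :=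
      le_trans (min_le_left _ _) (min_le_left _ _)
    have hq2 : quadMin G i0 i0' j j' ≤ orientedDist G i0 j' :=
      le_trans (min_le_left _ _) (min_le_right _ _)
    have hL : linkRad G ≤ fMax G i0 i0' := linkRad_le_fMax G i0 i0' hi0'
    simp only [orientedDist] at hx hy hq1 hq2
    rw [hi0] at hx hy
    omega
  -- Lower bound: R ≤ linkRad + 2
  have hB : R ≤ linkRad G + 2 := by
    obtain ⟨i, i', hii, hF⟩ := exists_linkRad G hab
    obtain ⟨j, hj⟩ := exists_eMax G i
    obtain ⟨j', hjj⟩ := exists_adj hconn hab j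
    have hRe : R ≤ eMax G i := oRad_le_eMax G i
    have hd1 : G.dist i j ≤ G.dist i j' + 1 := dist_adj_le hconn hjj.symm i
    have hd2 : G.dist j i ≤ G.dist j i' + 1 := dist_adj_le hconn hii.symm j
    have hd3 : G.dist j' i ≤ G.dist j' i' + 1 := dist_adj_le hconn hii.symm j'
    rw [SimpleGraph.dist_comm (u := j) (v := i), SimpleGraph.dist_comm (u := j) (v := i')] at hd2
    rw [SimpleGraph.dist_comm (u := j') (v := i), SimpleGraph.dist_comm (u := j') (v := i')] at hd3
    have hdist : G.dist i j + 1 = eMax G i := hj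
    have hqm : G.dist i j - 1 ≤ quadMin G i i' j j' := by
      refine le_min (le_min ?_ ?_) (le_min ?_ ?_) <;> simp only [orientedDist] <;> omega
    have hle : quadMin G i i' j j' ≤ fMax G i i' := le_fMax G i i' j j' hjj
    omega
  -- forward direction
  have fwd : linkRad G + 1 = R →
      ∀ i i' : α, G.Adj i i' →
        ∃ j j' : α, G.Adj j j' ∧
          R ≤ orientedDist G i j ∧ R ≤ orientedDist G i' j' := by
    intro hEq i i' hii
    obtain ⟨j, j', hjj, hq⟩ := exists_fMax G hab i i'
    have hL : linkRad G ≤ fMax G i i' := linkRad_le_fMax G i i' hii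
    have hge : R - 1 ≤ quadMin G i i' j j' := by omega
    simp only [quadMin, le_min_iff, orientedDist] at hge
    obtain ⟨⟨h1, h2⟩, h3, h4⟩ := hge
    have n1 : G.dist i j ≠ G.dist i j' := dist_ne hconn c hjj i
    have n2 : G.dist i' j ≠ G.dist i' j' := dist_ne hconn c hjj i'
    have n3 : G.dist j i ≠ G.dist j i' := dist_ne hconn c hii j
    have n4 : G.dist j' i ≠ G.dist j' i' := dist_ne hconn c hii j'
    rw [SimpleGraph.dist_comm (u := j) (v := i), SimpleGraph.dist_comm (u := j) (v := i')] at n3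
    rw [SimpleGraph.dist_comm (u := j') (v := i), SimpleGraph.dist_comm (u := j') (v := i')] at n4
    have key : (R ≤ G.dist i j + 1 ∧ R ≤ G.dist i' j' + 1) ∨
        (R ≤ G.dist i j' + 1 ∧ R ≤ G.dist i' j + 1) := by omega
    rcases key with ⟨k1, k2⟩ | ⟨k1, k2⟩
    · exact ⟨j, j', hjj, k1, k2⟩
    · exact ⟨j', j, hjj.symm, k1, k2⟩
  -- backward direction
  have bwd : (∀ i i' : α, G.Adj i i' →
      ∃ j j' : α, G.Adj j j' ∧
        R ≤ orientedDist G i j ∧ R ≤ orientedDist G i' j') →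
      R ≤ linkRad G + 1 := by
    intro hc
    obtain ⟨i, i', hii, hF⟩ := exists_linkRad G hab
    obtain ⟨j, j', hjj, h1, h2⟩ := hc i i' hii
    simp only [orientedDist] at h1 h2
    have hd2 : G.dist j i ≤ G.dist j i' + 1 := dist_adj_le hconn hii.symm j
    have hd3 : G.dist j' i' ≤ G.dist j' i + 1 := dist_adj_le hconn hii j'
    rw [SimpleGraph.dist_comm (u := j) (v := i), SimpleGraph.dist_comm (u := j) (v := i')] at hd2
    rw [SimpleGraph.dist_comm (u := j') (v := i'), SimpleGraph.dist_comm (u := j') (v := i)] at hd3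
    have hqm : R - 1 ≤ quadMin G i i' j j' := by
      refine le_min (le_min ?_ ?_) (le_min ?_ ?_) <;> simp only [orientedDist] <;> omega
    have hle : quadMin G i i' j j' ≤ fMax G i i' := le_fMax G i i' j j' hjj
    omega
  refine ⟨⟨fwd, fun hc => le_antisymm hA (bwd hc)⟩, fun hnc => ?_⟩
  have : ¬ (linkRad G + 1 = R) := fun h => hnc (fwd h)
  omega
end

section
/- Assume P, H, V, Θ and Ô are as in the context. Let i and j be two distinct members of H ∪ V (viewed as vertices of Θ), let p ∈ i and q ∈ j. Then there is a rectilinear path from p to q in P with exactly Ô(i,j) links; in particular rld(p,q) ≤ Ô(i,j). -/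
/-!
Walk along a shortest path `i = B₀, B₁, …, B_d = j` in `Θ`. Consecutive boxes are one
horizontal and one vertical box, and by the crossing condition their intersection contains
every point whose `x`-coordinate comes from the vertical box and whose `y`-coordinate comes
from the horizontal one. So from a point of `Bₜ` one axis-parallel link inside the convex box
`Bₜ` reaches `Bₜ ∩ Bₜ₊₁`; in the last step the point can be chosen aligned with `q`, so a
final link inside `B_d` ends at `q`. This uses `d + 1` links.
-/

/-- A segment with endpoints `p` and `q` is axis-parallel: horizontal (equal
`y`-coordinates) or vertical (equal `x`-coordinates). -/
def AxisParallel (p q : ℝ × ℝ) : Prop := p.2 = q.2 ∨ p.1 = q.1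

/-- `f` describes a rectilinear path from `p` to `q` in `P` with `k ≥ 1` links:
`f 0 = p`, `f k = q`, and each closed segment from `f t` to `f (t+1)` is contained
in `P` and is axis-parallel. -/
def IsRectPath (P : Set (ℝ × ℝ)) (p q : ℝ × ℝ) (k : ℕ) (f : ℕ → ℝ × ℝ) : Prop :=
  1 ≤ k ∧ f 0 = p ∧ f k = q ∧
    ∀ t < k, segment ℝ (f t) (f (t + 1)) ⊆ P ∧ AxisParallel (f t) (f (t + 1))

/-- The rectilinear link distance: the minimum link length of a rectilinear path
from `p` to `q` in `P`. -/
noncomputable def rld (P : Set (ℝ × ℝ)) (p q : ℝ × ℝ) : ℕ :=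
  sInf {k : ℕ | ∃ f : ℕ → ℝ × ℝ, IsRectPath P p q k f}

/-- A box: a closed axis-aligned rectangle `[a,b] × [c,d]` with `a < b` and `c < d`. -/
def IsBox (B : Set (ℝ × ℝ)) : Prop :=
  ∃ a b c d : ℝ, a < b ∧ c < d ∧ B = Set.Icc a b ×ˢ Set.Icc c d

/-- The graph of oriented distances `Θ`: the bipartite graph on the (disjoint) union of
the families `H` and `V`, with an edge between `h ∈ H` and `v ∈ V` exactly when
`h ∩ v ≠ ∅`. -/
def thetaGraph (H V : Set (Set (ℝ × ℝ))) :
    SimpleGraph {B : Set (ℝ × ℝ) // B ∈ H ∪ V} where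
  Adj x y := x ≠ y ∧
    ((x.1 ∈ H ∧ y.1 ∈ V) ∨ (x.1 ∈ V ∧ y.1 ∈ H)) ∧ (x.1 ∩ y.1).Nonempty
  symm := by
    constructor
    rintro x y ⟨hxy, hor, hne⟩
    refine ⟨hxy.symm, ?_, by rwa [Set.inter_comm]⟩
    rcases hor with ⟨h1, h2⟩ | ⟨h1, h2⟩
    · exact Or.inr ⟨h2, h1⟩
    · exact Or.inl ⟨h2, h1⟩
  loopless := by constructor; rintro x ⟨hxx, -⟩; exact hxx rfl

/-- The oriented distance `Ô(i,j)`: the graph distance in `Θ` plus one. -/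
noncomputable def oDist (H V : Set (Set (ℝ × ℝ)))
    (i j : {B : Set (ℝ × ℝ) // B ∈ H ∪ V}) : ℕ :=
  (thetaGraph H V).dist i j + 1

/-- `H` and `V` form a good decomposition of `P`: they are finite families of boxes
contained in `P`; every horizontal (resp. vertical) segment contained in `P` lies in
some member of `H` (resp. `V`); for `h ∈ H` and `v ∈ V` meeting each other, `h ∩ v`
is the product of the `x`-projection of `v` with the `y`-projection of `h`; and the
graph of oriented distances is connected. -/
structure GoodDecomp (P : Set (ℝ × ℝ)) (H V : Set (Set (ℝ × ℝ))) : Prop where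
  finH : H.Finite
  finV : V.Finite
  box : ∀ B ∈ H ∪ V, IsBox B
  sub : ∀ B ∈ H ∪ V, B ⊆ P
  covH : ∀ p q : ℝ × ℝ, p.2 = q.2 → segment ℝ p q ⊆ P → ∃ h ∈ H, segment ℝ p q ⊆ h
  covV : ∀ p q : ℝ × ℝ, p.1 = q.1 → segment ℝ p q ⊆ P → ∃ v ∈ V, segment ℝ p q ⊆ v
  cross : ∀ h ∈ H, ∀ v ∈ V, (h ∩ v).Nonempty →
    h ∩ v = (Prod.fst '' v) ×ˢ (Prod.snd '' h)
  conn : (thetaGraph H V).Connected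

open SimpleGraph

lemma IsBox.convex {B : Set (ℝ × ℝ)} (hB : IsBox B) : Convex ℝ B := by
  obtain ⟨a, b, c, d, -, -, rfl⟩ := hB
  exact (convex_Icc a b).prod (convex_Icc c d)

lemma IsRectPath.cons {P : Set (ℝ × ℝ)} {p p' q : ℝ × ℝ} {k : ℕ} {f : ℕ → ℝ × ℝ}
    (hf : IsRectPath P p' q k f) (hP : segment ℝ p p' ⊆ P) (hpp' : AxisParallel p p') :
    IsRectPath P p q (k + 1) (fun t => if t = 0 then p else f (t - 1)) := by
  obtain ⟨-, hf0, hfk, hseg⟩ := hf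
  refine ⟨le_add_self, rfl, by simpa using hfk, ?_⟩
  rintro (_ | t) ht
  · simpa [hf0] using ⟨hP, hpp'⟩
  · simpa using hseg t (by omega)

lemma isRectPath_two {P : Set (ℝ × ℝ)} {p m q : ℝ × ℝ}
    (hpm : segment ℝ p m ⊆ P) (hmq : segment ℝ m q ⊆ P)
    (hpm' : AxisParallel p m) (hmq' : AxisParallel m q) :
    ∃ f, IsRectPath P p q 2 f := by
  have hlast : IsRectPath P m q 1 (fun t => if t = 0 then m else q) := by
    refine ⟨le_rfl, rfl, rfl, fun t ht => ?_⟩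
    obtain rfl : t = 0 := by omega
    simpa using ⟨hmq, hmq'⟩
  exact ⟨_, hlast.cons hpm hpm'⟩

lemma rld_le_of_isRectPath {P : Set (ℝ × ℝ)} {p q : ℝ × ℝ} {k : ℕ} {f : ℕ → ℝ × ℝ}
    (hf : IsRectPath P p q k f) : rld P p q ≤ k :=
  Nat.sInf_le ⟨f, hf⟩

namespace GoodDecomp

variable {P : Set (ℝ × ℝ)} {H V : Set (Set (ℝ × ℝ))}

lemma segment_subset (hgood : GoodDecomp P H V) {B : Set (ℝ × ℝ)} (hB : B ∈ H ∪ V)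
    {x y : ℝ × ℝ} (hx : x ∈ B) (hy : y ∈ B) : segment ℝ x y ⊆ P :=
  ((hgood.box B hB).convex.segment_subset hx hy).trans (hgood.sub B hB)

lemma mk_mem_inter (hgood : GoodDecomp P H V) {h v : Set (ℝ × ℝ)} (hh : h ∈ H) (hv : v ∈ V)
    (hne : (h ∩ v).Nonempty) {a b : ℝ × ℝ} (ha : a ∈ v) (hb : b ∈ h) :
    (a.1, b.2) ∈ h ∩ v := by
  rw [hgood.cross h hh v hv hne]
  exact ⟨⟨a, ha, rfl⟩, ⟨b, hb, rfl⟩⟩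

lemma exists_link_of_adj (hgood : GoodDecomp P H V) {i i' : {B // B ∈ H ∪ V}}
    (hadj : (thetaGraph H V).Adj i i') {p r : ℝ × ℝ} (hp : p ∈ i.1) (hr : r ∈ i'.1) :
    ∃ m ∈ i'.1, segment ℝ p m ⊆ P ∧ AxisParallel p m ∧ AxisParallel m r := by
  obtain ⟨-, ⟨hiH, hi'V⟩ | ⟨hiV, hi'H⟩, hne⟩ := hadj
  · have hm := hgood.mk_mem_inter hiH hi'V hne hr hp
    exact ⟨_, hm.2, hgood.segment_subset i.2 hp hm.1, Or.inl rfl, Or.inr rfl⟩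
  · have hm := hgood.mk_mem_inter hi'H hiV (Set.inter_comm _ _ ▸ hne) hp hr
    exact ⟨_, hm.1, hgood.segment_subset i.2 hp hm.2, Or.inr rfl, Or.inl rfl⟩

lemma exists_isRectPath_of_adj_walk (hgood : GoodDecomp P H V) {i i₁ j : {B // B ∈ H ∪ V}}
    (hadj : (thetaGraph H V).Adj i i₁) (w : (thetaGraph H V).Walk i₁ j)
    {p q : ℝ × ℝ} (hp : p ∈ i.1) (hq : q ∈ j.1) :
    ∃ f, IsRectPath P p q (w.length + 2) f := by
  induction w generalizing i p with
  | @nil j =>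
    obtain ⟨m, hm, hpm, hpm', hmq'⟩ := hgood.exists_link_of_adj hadj hp hq
    exact isRectPath_two hpm (hgood.segment_subset j.2 hm hq) hpm' hmq'
  | cons hadj' w ih =>
    obtain ⟨z, -, hz⟩ := hadj.2.2
    obtain ⟨m, hm, hpm, hpm', -⟩ := hgood.exists_link_of_adj hadj hp hz
    obtain ⟨f, hf⟩ := ih hadj' hm hq
    exact ⟨_, hf.cons hpm hpm'⟩

end GoodDecomp

/-- If `i ≠ j` are vertices of `Θ`, `p ∈ i` and `q ∈ j`, then there is a rectilinear
path from `p` to `q` in `P` with exactly `Ô(i,j)` links; in particular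
`rld(p,q) ≤ Ô(i,j)`. -/
theorem exists_rectPath_of_oDist (P : Set (ℝ × ℝ)) (H V : Set (Set (ℝ × ℝ)))
    (hgood : GoodDecomp P H V)
    (i j : {B : Set (ℝ × ℝ) // B ∈ H ∪ V}) (hij : i ≠ j)
    (p q : ℝ × ℝ) (hp : p ∈ i.1) (hq : q ∈ j.1) :
    (∃ f : ℕ → ℝ × ℝ, IsRectPath P p q (oDist H V i j) f) ∧
      rld P p q ≤ oDist H V i j := by
  obtain ⟨w, hw⟩ := hgood.conn.exists_walk_length_eq_dist i j
  cases w with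
  | nil => exact absurd rfl hij
  | cons hadj w =>
    obtain ⟨f, hf⟩ := hgood.exists_isRectPath_of_adj_walk hadj w hp hq
    have hlen : w.length + 2 = oDist H V i j := by
      rw [oDist, ← hw, Walk.length_cons]
    rw [hlen] at hf
    exact ⟨⟨f, hf⟩, rld_le_of_isRectPath hf⟩
end

section
/- Assume P, H, V, Θ and Ô are as in the context, and let p, q ∈ P. For every rectilinear path from p to q in P with k links, there exist members i, j ∈ H ∪ V with p ∈ i and q ∈ j such that Ô(i,j) ≤ k. Consequently, rld(p,q) ≥ min{ Ô(i,j) : i, j ∈ H ∪ V, p ∈ i, q ∈ j }. -/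
/-!
Follow the path link by link, keeping a box of the current link's orientation that contains
the current point and is at distance at most (number of links so far − 1) in `Θ` from a box
containing `p`. At a turn the old box and the box covering the new link share the turning point
and have different orientations, so they are equal or adjacent in `Θ`; two consecutive links of
the same orientation are instead merged into a single segment of `P`, which is covered by one
box. For the bound on `rld` the minimum must be attained, i.e. `P` must be rectilinearly
connected: inside a box any two points are joined by two links, and a walk in the connected
graph `Θ` chains such paths together.
-/

open Set

/-- `true` stands for horizontal, `false` for vertical. -/
def IsAlong : Bool → ℝ × ℝ → ℝ × ℝ → Prop
  | true, a, b => a.2 = b.2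
  | false, a, b => a.1 = b.1

def boxesAlong (H V : Set (Set (ℝ × ℝ))) : Bool → Set (Set (ℝ × ℝ))
  | true => H
  | false => V

def RectReachable (P : Set (ℝ × ℝ)) (x y : ℝ × ℝ) : Prop :=
  ∃ k f, IsRectPath P x y k f

lemma IsAlong.trans {o : Bool} {a b c : ℝ × ℝ} (hab : IsAlong o a b) (hbc : IsAlong o b c) :
    IsAlong o a c := by
  cases o
  exacts [Eq.trans hab hbc, Eq.trans hab hbc]

lemma AxisParallel.isAlong_or_isAlong_not {a b : ℝ × ℝ} (h : AxisParallel a b) (o : Bool) :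
    IsAlong o a b ∨ IsAlong (!o) a b := by
  cases o
  exacts [h.symm, h]

lemma IsAlong.segment_subset_union {o : Bool} {a b c : ℝ × ℝ} (hab : IsAlong o a b)
    (hbc : IsAlong o b c) : segment ℝ a c ⊆ segment ℝ a b ∪ segment ℝ b c := by
  obtain ⟨a₁, a₂⟩ := a
  obtain ⟨b₁, b₂⟩ := b
  obtain ⟨c₁, c₂⟩ := c
  cases o
  · obtain rfl : a₁ = b₁ := hab
    obtain rfl : a₁ = c₁ := hbc
    simp_rw [← Prod.image_mk_segment_right, ← image_union, segment_eq_uIcc]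
    exact image_mono uIcc_subset_uIcc_union_uIcc
  · obtain rfl : a₂ = b₂ := hab
    obtain rfl : a₂ = c₂ := hbc
    simp_rw [← Prod.image_mk_segment_left, ← image_union, segment_eq_uIcc]
    exact image_mono uIcc_subset_uIcc_union_uIcc

lemma mem_union_of_mem_boxesAlong {H V : Set (Set (ℝ × ℝ))} {o : Bool} {B : Set (ℝ × ℝ)}
    (hB : B ∈ boxesAlong H V o) : B ∈ H ∪ V := by
  cases o
  exacts [Or.inr hB, Or.inl hB]

lemma thetaGraph_dist_le_one {H V : Set (Set (ℝ × ℝ))} {o : Bool}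
    {i j : {B : Set (ℝ × ℝ) // B ∈ H ∪ V}} (hi : i.1 ∈ boxesAlong H V (!o))
    (hj : j.1 ∈ boxesAlong H V o) {x : ℝ × ℝ} (hxi : x ∈ i.1) (hxj : x ∈ j.1) :
    (thetaGraph H V).dist i j ≤ 1 := by
  by_cases hij : i = j
  · simp [hij]
  · have hHV : (i.1 ∈ H ∧ j.1 ∈ V) ∨ (i.1 ∈ V ∧ j.1 ∈ H) := by
      cases o
      exacts [Or.inl ⟨hi, hj⟩, Or.inr ⟨hi, hj⟩]
    have hadj : (thetaGraph H V).Adj i j := ⟨hij, hHV, x, hxi, hxj⟩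
    exact (SimpleGraph.dist_eq_one_iff_adj.2 hadj).le

lemma IsRectPath.append {P : Set (ℝ × ℝ)} {x y z : ℝ × ℝ} {k m : ℕ} {f g : ℕ → ℝ × ℝ}
    (hf : IsRectPath P x y k f) (hg : IsRectPath P y z m g) :
    IsRectPath P x z (k + m) (fun t => if t ≤ k then f t else g (t - k)) := by
  obtain ⟨hk, hf0, hfk, hf⟩ := hf
  obtain ⟨hm, hg0, hgm, hg⟩ := hg
  have tail : ∀ s, (if k + s ≤ k then f (k + s) else g (k + s - k)) = g s := by
    intro s
    rcases Nat.eq_zero_or_pos s with rfl | hs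
    · simp [hfk, hg0]
    · simp [show ¬k + s ≤ k by omega]
  refine ⟨by omega, by simp [hf0], (tail m).trans hgm, fun t ht => ?_⟩
  rcases lt_or_ge t k with htk | htk
  · simpa [htk.le, Nat.succ_le_of_lt htk] using hf t htk
  · obtain ⟨s, rfl⟩ := Nat.exists_eq_add_of_le htk
    simpa only [tail, add_assoc] using hg s (by omega)

lemma RectReachable.trans {P : Set (ℝ × ℝ)} {x y z : ℝ × ℝ} (hxy : RectReachable P x y)
    (hyz : RectReachable P y z) : RectReachable P x z := by
  obtain ⟨_, _, hf⟩ := hxy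
  obtain ⟨_, _, hg⟩ := hyz
  exact ⟨_, _, hf.append hg⟩

lemma IsBox.rectReachable {P B : Set (ℝ × ℝ)} (hB : IsBox B) (hBP : B ⊆ P) {x y : ℝ × ℝ}
    (hx : x ∈ B) (hy : y ∈ B) : RectReachable P x y := by
  obtain ⟨a, b, c, d, -, -, rfl⟩ := hB
  have hconv : Convex ℝ (Icc a b ×ˢ Icc c d) := (convex_Icc a b).prod (convex_Icc c d)
  have hcorner : (y.1, x.2) ∈ Icc a b ×ˢ Icc c d := ⟨hy.1, hx.2⟩
  refine ⟨2, fun t => if t = 0 then x else if t = 1 then (y.1, x.2) else y,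
    Nat.le_succ 1, rfl, rfl, fun t ht => ?_⟩
  interval_cases t
  · exact ⟨(hconv.segment_subset hx hcorner).trans hBP, Or.inl rfl⟩
  · exact ⟨(hconv.segment_subset hcorner hy).trans hBP, Or.inr rfl⟩

namespace GoodDecomp

variable {P : Set (ℝ × ℝ)} {H V : Set (Set (ℝ × ℝ))}

lemma exists_mem_boxesAlong (hgood : GoodDecomp P H V) {o : Bool} {a b : ℝ × ℝ}
    (hab : IsAlong o a b) (hP : segment ℝ a b ⊆ P) :
    ∃ B ∈ boxesAlong H V o, segment ℝ a b ⊆ B := by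
  cases o
  exacts [hgood.covV a b hab hP, hgood.covH a b hab hP]

lemma exists_mem_of_mem (hgood : GoodDecomp P H V) {p : ℝ × ℝ} (hp : p ∈ P) :
    ∃ B ∈ H, p ∈ B := by
  obtain ⟨B, hB, hpB⟩ := hgood.covH p p rfl (by simpa [segment_same] using hp)
  exact ⟨B, hB, hpB (left_mem_segment ℝ p p)⟩

lemma rectReachable_of_walk (hgood : GoodDecomp P H V) {i j : {B : Set (ℝ × ℝ) // B ∈ H ∪ V}}
    (w : (thetaGraph H V).Walk i j) {x y : ℝ × ℝ} (hx : x ∈ i.1) (hy : y ∈ j.1) :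
    RectReachable P x y := by
  induction w generalizing x with
  | @nil u => exact (hgood.box u.1 u.2).rectReachable (hgood.sub u.1 u.2) hx hy
  | @cons u _ _ hadj _ ih =>
    obtain ⟨z, hzu, hzv⟩ := hadj.2.2
    exact ((hgood.box u.1 u.2).rectReachable (hgood.sub u.1 u.2) hx hzu).trans (ih hzv hy)

lemma rectReachable (hgood : GoodDecomp P H V) {p q : ℝ × ℝ} (hp : p ∈ P) (hq : q ∈ P) :
    RectReachable P p q := by
  obtain ⟨B, hB, hpB⟩ := hgood.exists_mem_of_mem hp
  obtain ⟨B', hB', hqB'⟩ := hgood.exists_mem_of_mem hq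
  obtain ⟨w⟩ := hgood.conn.preconnected ⟨B, Or.inl hB⟩ ⟨B', Or.inl hB'⟩
  exact hgood.rectReachable_of_walk w hpB hqB'

/-- `f 0, …, f t, z` is a path with `t + 1` links, the last one along `o`; leaving `z` free
lets a link along `o` absorb the next one when that is along `o` too. -/
lemma exists_dist_le_of_links (hgood : GoodDecomp P H V) {f : ℕ → ℝ × ℝ} {t : ℕ}
    (hf : ∀ s < t, segment ℝ (f s) (f (s + 1)) ⊆ P ∧ AxisParallel (f s) (f (s + 1)))
    {o : Bool} {z : ℝ × ℝ} (hoz : IsAlong o (f t) z) (hz : segment ℝ (f t) z ⊆ P) :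
    ∃ i j : {B : Set (ℝ × ℝ) // B ∈ H ∪ V}, f 0 ∈ i.1 ∧ j.1 ∈ boxesAlong H V o ∧ z ∈ j.1 ∧
      (thetaGraph H V).dist i j ≤ t := by
  induction t generalizing o z with
  | zero =>
    obtain ⟨B, hB, hzB⟩ := hgood.exists_mem_boxesAlong hoz hz
    refine ⟨⟨B, mem_union_of_mem_boxesAlong hB⟩, ⟨B, mem_union_of_mem_boxesAlong hB⟩,
      hzB (left_mem_segment ℝ _ _), hB, hzB (right_mem_segment ℝ _ _), by simp⟩
  | succ t ih =>
    have hprefix : ∀ s < t, _ := fun s hs => hf s (by omega)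
    obtain ⟨hlastP, hlast⟩ := hf t (by omega)
    rcases hlast.isAlong_or_isAlong_not o with hturn | hturn
    · have hmerged : segment ℝ (f t) z ⊆ P :=
        (hturn.segment_subset_union hoz).trans (union_subset hlastP hz)
      obtain ⟨i, j, hi, hj, hzj, hd⟩ := ih hprefix (hturn.trans hoz) hmerged
      exact ⟨i, j, hi, hj, hzj, by omega⟩
    · obtain ⟨i, j', hi, hj', hj'z, hd⟩ := ih hprefix hturn hlastP
      obtain ⟨B, hB, hzB⟩ := hgood.exists_mem_boxesAlong hoz hz
      let j : {B : Set (ℝ × ℝ) // B ∈ H ∪ V} := ⟨B, mem_union_of_mem_boxesAlong hB⟩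
      have hturnDist : (thetaGraph H V).dist j' j ≤ 1 :=
        thetaGraph_dist_le_one hj' hB hj'z (hzB (left_mem_segment ℝ _ _))
      have htriangle := hgood.conn.dist_triangle (u := i) (v := j') (w := j)
      exact ⟨i, j, hi, hB, hzB (right_mem_segment ℝ _ _), by omega⟩

end GoodDecomp

lemma IsRectPath.exists_oDist_le {P : Set (ℝ × ℝ)} {H V : Set (Set (ℝ × ℝ))}
    (hgood : GoodDecomp P H V) {p q : ℝ × ℝ} {k : ℕ} {f : ℕ → ℝ × ℝ}
    (hf : IsRectPath P p q k f) :
    ∃ i j : {B : Set (ℝ × ℝ) // B ∈ H ∪ V}, p ∈ i.1 ∧ q ∈ j.1 ∧ oDist H V i j ≤ k := by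
  obtain ⟨hk, rfl, rfl, hlinks⟩ := hf
  obtain ⟨t, rfl⟩ := Nat.exists_eq_add_of_le' hk
  obtain ⟨hlastP, hlast⟩ := hlinks t (by omega)
  obtain ⟨o, ho⟩ : ∃ o, IsAlong o (f t) (f (t + 1)) :=
    (hlast.isAlong_or_isAlong_not true).elim (⟨true, ·⟩) (⟨false, ·⟩)
  obtain ⟨i, j, hi, -, hj, hd⟩ :=
    hgood.exists_dist_le_of_links (fun s hs => hlinks s (by omega)) ho hlastP
  exact ⟨i, j, hi, hj, by unfold oDist; omega⟩

/-- For `p, q ∈ P`, every rectilinear path from `p` to `q` in `P` with `k` links yields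
members `i, j ∈ H ∪ V` with `p ∈ i`, `q ∈ j` and `Ô(i,j) ≤ k`; consequently
`rld(p,q) ≥ min{ Ô(i,j) : i, j ∈ H ∪ V, p ∈ i, q ∈ j }`. -/
theorem oDist_le_of_rectPath (P : Set (ℝ × ℝ)) (H V : Set (Set (ℝ × ℝ)))
    (hgood : GoodDecomp P H V)
    (p q : ℝ × ℝ) (hp : p ∈ P) (hq : q ∈ P) :
    (∀ (k : ℕ) (f : ℕ → ℝ × ℝ), IsRectPath P p q k f →
      ∃ i j : {B : Set (ℝ × ℝ) // B ∈ H ∪ V},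
        p ∈ i.1 ∧ q ∈ j.1 ∧ oDist H V i j ≤ k) ∧
    sInf {m : ℕ | ∃ i j : {B : Set (ℝ × ℝ) // B ∈ H ∪ V},
        p ∈ i.1 ∧ q ∈ j.1 ∧ oDist H V i j = m} ≤ rld P p q := by
  refine ⟨fun _ _ hf => hf.exists_oDist_le hgood, ?_⟩
  obtain ⟨f, hf⟩ : rld P p q ∈ {k : ℕ | ∃ f, IsRectPath P p q k f} :=
    Nat.sInf_mem (hgood.rectReachable hp hq)
  obtain ⟨i, j, hi, hj, hle⟩ := hf.exists_oDist_le hgood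
  refine (Nat.sInf_le ?_).trans hle
  exact ⟨i, j, hi, hj, rfl⟩
end
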